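/- Let p : E → B be continuous and suppose that for every space X and map f : X × [0,1] → B there exists a lifting function for f. Then for every space X and map f : X × [0,1] → B there exists an extended lifting function for f: a continuous map Λ : W̃ × [0,1] → E, where W̃ = {(e, x, s) ∈ E × X × [0,1] : p(e) = f(x, s)}, satisfying p(Λ((e,x,s), t)) = f(x, t) for all t and Λ((e,x,s), s) = e. -/
import Mathlib

open unitInterval Set

/-- Truncated subtraction on the unit interval. -/
noncomputable def isub (s t : I) : I := Set.projIcc 0 1 zero_le_one ((s : ℝ) - t)

/-- Truncated addition on the unit interval. -/
noncomputable def iadd (s t : I) : I := Set.projIcc 0 1 zero_le_one ((s : ℝ) + t)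

lemma continuous_isub : Continuous fun q : I × I => isub q.1 q.2 := by
  exact continuous_projIcc.comp ((continuous_subtype_val.comp continuous_fst).sub (continuous_subtype_val.comp continuous_snd))

lemma continuous_iadd : Continuous fun q : I × I => iadd q.1 q.2 := by
  exact continuous_projIcc.comp ((continuous_subtype_val.comp continuous_fst).add (continuous_subtype_val.comp continuous_snd))

lemma isub_coe_of_le {s t : I} (h : t ≤ s) : (isub s t : ℝ) = (s : ℝ) - t := by
  have hm : ((s : ℝ) - t) ∈ Set.Icc (0 : ℝ) 1 := by
    constructor
    · have : (t : ℝ) ≤ s := h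
      linarith
    · have := s.2.2; have := t.2.1; linarith
  rw [isub, Set.projIcc_of_mem _ hm]

lemma iadd_coe_of_le {s t : I} (h : (s : ℝ) + t ≤ 1) : (iadd s t : ℝ) = (s : ℝ) + t := by
  have hm : ((s : ℝ) + t) ∈ Set.Icc (0 : ℝ) 1 := ⟨by have := s.2.1; have := t.2.1; linarith, h⟩
  rw [iadd, Set.projIcc_of_mem _ hm]

lemma isub_zero (s : I) : isub s 0 = s := by
  apply Subtype.ext
  rw [isub_coe_of_le s.2.1]
  simp

lemma iadd_zero (s : I) : iadd s 0 = s := by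
  apply Subtype.ext
  rw [iadd_coe_of_le (by simpa using s.2.2)]
  simp

lemma isub_self (s : I) : isub s s = 0 := by
  apply Subtype.ext
  rw [isub_coe_of_le le_rfl]
  simp

lemma isub_isub {s t : I} (h : t ≤ s) : isub s (isub s t) = t := by
  have h1 : isub s t ≤ s := by
    rw [← Subtype.coe_le_coe, isub_coe_of_le h]
    have := t.2.1; linarith
  apply Subtype.ext
  rw [isub_coe_of_le h1, isub_coe_of_le h]
  ring

lemma iadd_isub {s t : I} (h : s ≤ t) : iadd s (isub t s) = t := by
  have h1 : (s : ℝ) + isub t s ≤ 1 := by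
    rw [isub_coe_of_le h]
    have := t.2.2; linarith
  apply Subtype.ext
  rw [iadd_coe_of_le h1, isub_coe_of_le h]
  ring

/-- If every homotopy into `B` admits a lifting function (with respect to `p : E → B`), then
every homotopy into `B` admits an extended lifting function. -/
theorem lifting_function_to_extended {E B : Type} [TopologicalSpace E] [TopologicalSpace B]
    (p : E → B) (hp : Continuous p)
    (hlift : ∀ (X : Type) [TopologicalSpace X] (f : C(X × I, B)),
      ∃ lam : C({q : E × X // p q.1 = f (q.2, 0)} × I, E),
        (∀ (q : {q : E × X // p q.1 = f (q.2, 0)}) (t : I), p (lam (q, t)) = f (q.1.2, t)) ∧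
        ∀ q : {q : E × X // p q.1 = f (q.2, 0)}, lam (q, 0) = q.1.1) :
    ∀ (X : Type) [TopologicalSpace X] (f : C(X × I, B)),
      ∃ Lam : C({w : E × X × I // p w.1 = f (w.2.1, w.2.2)} × I, E),
        (∀ (w : {w : E × X × I // p w.1 = f (w.2.1, w.2.2)}) (t : I),
          p (Lam (w, t)) = f (w.1.2.1, t)) ∧
        ∀ w : {w : E × X × I // p w.1 = f (w.2.1, w.2.2)}, Lam (w, w.1.2.2) = w.1.1 := by
  intro X _ f
  -- the backwards path: f₁((x,s), t) = f(x, s ⊖ t)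
  set f₁ : C((X × I) × I, B) := ⟨fun q => f (q.1.1, isub q.1.2 q.2), by
    apply f.continuous.comp
    exact continuous_fst.fst.prodMk
      (continuous_isub.comp (continuous_fst.snd.prodMk continuous_snd))⟩ with hf₁
  -- the forwards path: f₂((x,s), t) = f(x, s ⊕ t)
  set f₂ : C((X × I) × I, B) := ⟨fun q => f (q.1.1, iadd q.1.2 q.2), by
    apply f.continuous.comp
    exact continuous_fst.fst.prodMk
      (continuous_iadd.comp (continuous_fst.snd.prodMk continuous_snd))⟩ with hf₂
  obtain ⟨lam₁, hp₁, h0₁⟩ := hlift (X × I) f₁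
  obtain ⟨lam₂, hp₂, h0₂⟩ := hlift (X × I) f₂
  set W := {w : E × X × I // p w.1 = f (w.2.1, w.2.2)}
  -- the reassociation maps into the two subtypes
  have hc₁ : ∀ w : W, p (w.1.1, (w.1.2.1, w.1.2.2)).1 = f₁ ((w.1.1, (w.1.2.1, w.1.2.2)).2, 0) := by
    intro w
    simp only [hf₁, ContinuousMap.coe_mk, isub_zero]
    exact w.2
  have hc₂ : ∀ w : W, p (w.1.1, (w.1.2.1, w.1.2.2)).1 = f₂ ((w.1.1, (w.1.2.1, w.1.2.2)).2, 0) := by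
    intro w
    simp only [hf₂, ContinuousMap.coe_mk, iadd_zero]
    exact w.2
  set ρ₁ : W → {q : E × (X × I) // p q.1 = f₁ (q.2, 0)} :=
    fun w => ⟨(w.1.1, (w.1.2.1, w.1.2.2)), hc₁ w⟩ with hρ₁
  set ρ₂ : W → {q : E × (X × I) // p q.1 = f₂ (q.2, 0)} :=
    fun w => ⟨(w.1.1, (w.1.2.1, w.1.2.2)), hc₂ w⟩ with hρ₂
  have hcρ₁ : Continuous ρ₁ := by
    apply Continuous.subtype_mk
    fun_prop
  have hcρ₂ : Continuous ρ₂ := by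
    apply Continuous.subtype_mk
    fun_prop
  refine ⟨⟨fun z => if z.2 ≤ z.1.1.2.2 then lam₁ (ρ₁ z.1, isub z.1.1.2.2 z.2)
      else lam₂ (ρ₂ z.1, isub z.2 z.1.1.2.2), ?_⟩, ?_, ?_⟩
  · apply Continuous.if_le
    · exact lam₁.continuous.comp ((hcρ₁.comp continuous_fst).prodMk
        (continuous_isub.comp ((continuous_subtype_val.comp continuous_fst).snd.snd.prodMk
          continuous_snd)))
    · exact lam₂.continuous.comp ((hcρ₂.comp continuous_fst).prodMk
        (continuous_isub.comp (continuous_snd.prodMk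
          (continuous_subtype_val.comp continuous_fst).snd.snd)))
    · exact continuous_snd
    · exact (continuous_subtype_val.comp continuous_fst).snd.snd
    · intro z hz
      rw [hz, isub_self]
      rw [h0₁, h0₂]
  · intro w t
    simp only [ContinuousMap.coe_mk]
    split_ifs with h
    · rw [hp₁]
      simp only [hf₁, ContinuousMap.coe_mk, hρ₁]
      rw [isub_isub h]
    · rw [hp₂]
      simp only [hf₂, ContinuousMap.coe_mk, hρ₂]
      rw [iadd_isub (le_of_not_ge h)]
  · intro w
    simp only [ContinuousMap.coe_mk, le_refl, if_true, isub_self]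
    rw [h0₁]
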